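/- arXiv:2308.02860 — 2 statements merged into one kernel-verified Lean document; each statement's English description precedes it below -/
import Mathlib

section
/- Let S be a finite set with scores s : S → ℝ and let a, b ∈ S be distinct. Under the Plackett–Luce distribution on S with scores s, the probability that a appears before b in a random arrangement of S equals exp(s(a)) / (exp(s(a)) + exp(s(b))). -/
/-- Plackett–Luce probability of an arrangement given as a list:
`P_s(π) = ∏_i exp (s π_i) / ∑_{j ≥ i} exp (s π_j)`. -/
noncomputable def plProb {α : Type*} (s : α → ℝ) : List α → ℝ
  | [] => 1
  | d :: t => Real.exp (s d) / (((d :: t).map fun k => Real.exp (s k)).sum) * plProb s t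

/-- Probability of an event `E` under the Plackett–Luce distribution over the
arrangements of the finite set `S`. -/
noncomputable def plPr {α : Type*} [DecidableEq α] (s : α → ℝ) (S : Finset α)
    (E : Set (List α)) : ℝ :=
  ∑ l ∈ S.toList.permutations.toFinset, E.indicator (plProb s) l

private lemma mem_perms {α : Type*} [DecidableEq α] {S : Finset α} {l : List α} :
    l ∈ S.toList.permutations.toFinset ↔ (l : Multiset α) = S.val := by
  rw [List.mem_toFinset, List.mem_permutations, ← Multiset.coe_eq_coe, Finset.coe_toList]

private lemma sum_perms_cons {α : Type*} [DecidableEq α] (S : Finset α) (hS : S.Nonempty)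
    (f : List α → ℝ) :
    ∑ l ∈ S.toList.permutations.toFinset, f l
      = ∑ d ∈ S, ∑ t ∈ (S.erase d).toList.permutations.toFinset, f (d :: t) := by
  have hdecomp : S.toList.permutations.toFinset
      = S.biUnion fun d => ((S.erase d).toList.permutations.toFinset).image (d :: ·) := by
    ext l
    simp only [Finset.mem_biUnion, Finset.mem_image, mem_perms]
    constructor
    · intro hl
      match l with
      | [] =>
        exfalso
        obtain ⟨x, hx⟩ := hS
        have : x ∈ (([] : List α) : Multiset α) := by rw [hl]; exact hx
        simp at this
      | d :: t =>
        have hd : d ∈ S := by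
          have : d ∈ S.val := by rw [← hl]; simp
          exact this
        refine ⟨d, hd, t, ?_, rfl⟩
        rw [Finset.erase_val, ← hl]
        simp
    · rintro ⟨d, hd, t, ht, rfl⟩
      show ((d :: t : List α) : Multiset α) = S.val
      rw [← Multiset.cons_coe, ht, Finset.erase_val,
        Multiset.cons_erase (by exact hd : d ∈ S.val)]
  rw [hdecomp, Finset.sum_biUnion]
  · refine Finset.sum_congr rfl fun d _ => ?_
    exact Finset.sum_image fun x _ y _ h => by injection h
  · intro d hd e he hde
    refine Finset.disjoint_left.mpr ?_
    rintro x hx hx'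
    obtain ⟨t, -, rfl⟩ := Finset.mem_image.mp hx
    obtain ⟨t', -, h⟩ := Finset.mem_image.mp hx'
    exact hde (by injection h.symm)

private lemma list_sum_eq {α : Type*} [DecidableEq α] {S : Finset α} {l : List α}
    (hl : (l : Multiset α) = S.val) (f : α → ℝ) :
    (l.map f).sum = ∑ k ∈ S, f k := by
  have : ((l.map f : List ℝ) : Multiset ℝ).sum = (S.val.map f).sum := by
    rw [← hl]; simp
  simpa using this

private lemma sum_plProb {α : Type*} [DecidableEq α] (s : α → ℝ) (S : Finset α) :
    ∑ l ∈ S.toList.permutations.toFinset, plProb s l = 1 := by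
  induction S using Finset.strongInduction with
  | _ S ih =>
    rcases S.eq_empty_or_nonempty with rfl | hS
    · simp [plProb]
    · rw [sum_perms_cons S hS]
      have hW : (0 : ℝ) < ∑ k ∈ S, Real.exp (s k) :=
        Finset.sum_pos (fun _ _ => Real.exp_pos _) hS
      have key : ∀ d ∈ S, ∑ t ∈ (S.erase d).toList.permutations.toFinset,
          plProb s (d :: t) = Real.exp (s d) / ∑ k ∈ S, Real.exp (s k) := by
        intro d hd
        have : ∀ t ∈ (S.erase d).toList.permutations.toFinset,
            plProb s (d :: t)
              = (Real.exp (s d) / ∑ k ∈ S, Real.exp (s k)) * plProb s t := by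
          intro t ht
          have ht' : ((d :: t : List α) : Multiset α) = S.val := by
            rw [← Multiset.cons_coe, mem_perms.mp ht, Finset.erase_val,
              Multiset.cons_erase (by exact hd : d ∈ S.val)]
          rw [plProb, list_sum_eq ht']
        rw [Finset.sum_congr rfl this, ← Finset.mul_sum,
          ih (S.erase d) (Finset.erase_ssubset hd), mul_one]
      rw [Finset.sum_congr rfl key, ← Finset.sum_div, div_self hW.ne']

private lemma pl_key {α : Type*} [DecidableEq α] (s : α → ℝ) (a b : α) (hab : a ≠ b) :
    ∀ S : Finset α, a ∈ S → b ∈ S →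
      ∑ l ∈ S.toList.permutations.toFinset,
          ({l | l.idxOf a < l.idxOf b} : Set (List α)).indicator (plProb s) l
        = Real.exp (s a) / (Real.exp (s a) + Real.exp (s b)) := by
  intro S
  induction S using Finset.strongInduction with
  | _ S ih =>
    intro ha hb
    have hS : S.Nonempty := ⟨a, ha⟩
    set w : α → ℝ := fun k => Real.exp (s k) with hw
    set W : ℝ := ∑ k ∈ S, Real.exp (s k) with hWdef
    have hW : (0 : ℝ) < W := Finset.sum_pos (fun _ _ => Real.exp_pos _) hS
    have hplcons : ∀ d ∈ S, ∀ t ∈ (S.erase d).toList.permutations.toFinset,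
        plProb s (d :: t) = (Real.exp (s d) / W) * plProb s t := by
      intro d hd t ht
      have ht' : ((d :: t : List α) : Multiset α) = S.val := by
        rw [← Multiset.cons_coe, mem_perms.mp ht, Finset.erase_val,
          Multiset.cons_erase (by exact hd : d ∈ S.val)]
      rw [plProb, list_sum_eq ht']
    rw [sum_perms_cons S hS]
    set E : Set (List α) := {l | l.idxOf a < l.idxOf b} with hE
    set g : α → ℝ := fun d => ∑ t ∈ (S.erase d).toList.permutations.toFinset,
      E.indicator (plProb s) (d :: t) with hg
    have hga : g a = Real.exp (s a) / W := by
      simp only [hg]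
      have : ∀ t ∈ (S.erase a).toList.permutations.toFinset,
          E.indicator (plProb s) (a :: t) = (Real.exp (s a) / W) * plProb s t := by
        intro t ht
        rw [Set.indicator_of_mem, hplcons a ha t ht]
        show (a :: t).idxOf a < (a :: t).idxOf b
        rw [List.idxOf_cons_self, List.idxOf_cons_ne _ hab]
        exact Nat.succ_pos _
      rw [Finset.sum_congr rfl this, ← Finset.mul_sum, sum_plProb, mul_one]
    have hgb : g b = 0 := by
      simp only [hg]
      refine Finset.sum_eq_zero fun t ht => ?_
      refine Set.indicator_of_notMem ?_ _
      show ¬ (b :: t).idxOf a < (b :: t).idxOf b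
      rw [List.idxOf_cons_self]
      exact Nat.not_lt_zero _
    have hgd : ∀ d ∈ (S.erase a).erase b,
        g d = (Real.exp (s d) / W) * (Real.exp (s a) / (Real.exp (s a) + Real.exp (s b))) := by
      intro d hd
      have hdb : d ≠ b := Finset.ne_of_mem_erase hd
      have hda : d ≠ a := Finset.ne_of_mem_erase (Finset.mem_of_mem_erase hd)
      have hdS : d ∈ S := Finset.mem_of_mem_erase (Finset.mem_of_mem_erase hd)
      have hstep : ∀ t ∈ (S.erase d).toList.permutations.toFinset,
          E.indicator (plProb s) (d :: t)
            = (Real.exp (s d) / W) * E.indicator (plProb s) t := by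
        intro t ht
        by_cases hmem : t ∈ E
        · rw [Set.indicator_of_mem hmem, Set.indicator_of_mem, hplcons d hdS t ht]
          show (d :: t).idxOf a < (d :: t).idxOf b
          rw [List.idxOf_cons_ne _ hda, List.idxOf_cons_ne _ hdb]
          exact Nat.succ_lt_succ hmem
        · rw [Set.indicator_of_notMem hmem, Set.indicator_of_notMem, mul_zero]
          show ¬ (d :: t).idxOf a < (d :: t).idxOf b
          rw [List.idxOf_cons_ne _ hda, List.idxOf_cons_ne _ hdb]
          exact fun h => hmem (Nat.lt_of_succ_lt_succ h)
      simp only [hg]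
      rw [Finset.sum_congr rfl hstep, ← Finset.mul_sum,
        ih (S.erase d) (Finset.erase_ssubset hdS)
          (Finset.mem_erase.mpr ⟨Ne.symm hda, ha⟩)
          (Finset.mem_erase.mpr ⟨Ne.symm hdb, hb⟩)]
    have hsplit : ∑ d ∈ S, g d = g a + (g b + ∑ d ∈ (S.erase a).erase b, g d) := by
      rw [Finset.add_sum_erase _ _ (Finset.mem_erase.mpr ⟨Ne.symm hab, hb⟩),
        Finset.add_sum_erase _ _ ha]
    have hrest : ∑ d ∈ (S.erase a).erase b, Real.exp (s d)
        = W - Real.exp (s a) - Real.exp (s b) := by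
      rw [Finset.sum_erase_eq_sub (Finset.mem_erase.mpr ⟨Ne.symm hab, hb⟩),
        Finset.sum_erase_eq_sub ha, hWdef]
    calc ∑ d ∈ S, g d
        = g a + (g b + ∑ d ∈ (S.erase a).erase b, g d) := hsplit
      _ = Real.exp (s a) / W + (W - Real.exp (s a) - Real.exp (s b)) / W
            * (Real.exp (s a) / (Real.exp (s a) + Real.exp (s b))) := by
          rw [hga, hgb, Finset.sum_congr rfl hgd, ← Finset.sum_mul, ← Finset.sum_div, hrest]
          ring
      _ = Real.exp (s a) / (Real.exp (s a) + Real.exp (s b)) := by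
          have hab' : (0 : ℝ) < Real.exp (s a) + Real.exp (s b) := by positivity
          field_simp
          ring

/-- Under the Plackett–Luce distribution on `S`, for distinct `a, b ∈ S`, the
probability that `a` appears before `b` in a random arrangement equals
`exp (s a) / (exp (s a) + exp (s b))`. -/
theorem pl_pairwise {α : Type*} [DecidableEq α] (S : Finset α) (s : α → ℝ)
    (a b : α) (ha : a ∈ S) (hb : b ∈ S) (hab : a ≠ b) :
    plPr s S {l | l.idxOf a < l.idxOf b}
      = Real.exp (s a) / (Real.exp (s a) + Real.exp (s b)) := by
  rw [plPr]
  exact pl_key s a b hab S ha hb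
end

section
/- (Independence from irrelevant alternatives for Plackett–Luce.) Let Π be a random arrangement of a finite set S distributed according to the Plackett–Luce distribution with scores s, let p = (d_1, …, d_{i−1}) be a list of distinct elements of S with positive probability of being the first i−1 entries of Π, and let d, d′ ∈ S ∖ {d_1, …, d_{i−1}} be distinct. Then the ratio P(Π_i = d | (Π_1, …, Π_{i−1}) = p) / P(Π_i = d′ | (Π_1, …, Π_{i−1}) = p) equals exp(s(d) − s(d′)); in particular this ratio does not depend on the prefix p nor on the ambient candidate set S. -/
noncomputable def preP {α : Type*} [DecidableEq α] (s : α → ℝ) : List α → List α → ℝ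
  | [], _ => 1
  | a :: t, R => Real.exp (s a) / ((R.map fun k => Real.exp (s k)).sum) * preP s t (R.erase a)

lemma sum_exp_pos {α : Type*} (s : α → ℝ) {l : List α} (hl : l ≠ []) :
    0 < ((l.map fun k => Real.exp (s k)).sum) := by
  cases l with
  | nil => simp at hl
  | cons a t =>
    simp only [List.map_cons, List.sum_cons]
    have : (0:ℝ) ≤ (t.map fun k => Real.exp (s k)).sum :=
      List.sum_nonneg (by simp; intro x _; positivity)
    have := Real.exp_pos (s a)
    linarith

lemma sum_exp_perm {α : Type*} (s : α → ℝ) {l l' : List α} (h : l.Perm l') :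
    ((l.map fun k => Real.exp (s k)).sum) = ((l'.map fun k => Real.exp (s k)).sum) :=
  (h.map _).sum_eq

/-- Sum of `plProb` over all permutations of a nodup list equals 1. -/
lemma sum_plProb_s7 {α : Type*} [DecidableEq α] (s : α → ℝ) :
    ∀ n (L : List α), L.length = n → L.Nodup →
      ∑ l ∈ L.permutations.toFinset, plProb s l = 1 := by
  intro n
  induction n using Nat.strong_induction_on with
  | _ n ih =>
    intro L hn hnd
    cases n with
    | zero =>
      have : L = [] := List.length_eq_zero_iff.mp hn
      subst this
      simp [plProb]
    | succ m =>
      have hLne : L ≠ [] := by intro h; simp [h] at hn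
      have hbij : ∑ x ∈ (L.toFinset.sigma fun a => ((L.erase a).permutations.toFinset)),
          plProb s (x.1 :: x.2) = ∑ l ∈ L.permutations.toFinset, plProb s l := by
        refine Finset.sum_bij (fun x _ => x.1 :: x.2) ?_ ?_ ?_ ?_
        · rintro ⟨a, q⟩ hx
          simp only [Finset.mem_sigma, List.mem_toFinset, List.mem_permutations] at hx ⊢
          exact hx.2.cons a |>.trans (List.perm_cons_erase hx.1).symm
        · rintro ⟨a, q⟩ _ ⟨b, r⟩ _ h
          simp at h
          simp [h.1, h.2]
        · intro l hl
          simp only [List.mem_toFinset, List.mem_permutations] at hl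
          cases l with
          | nil =>
            exfalso
            have := hl.length_eq
            simp [hn] at this
          | cons a t =>
            refine ⟨⟨a, t⟩, ?_, rfl⟩
            simp only [Finset.mem_sigma, List.mem_toFinset, List.mem_permutations]
            have ha : a ∈ L := hl.subset (by simp)
            refine ⟨ha, ?_⟩
            exact (hl.trans (List.perm_cons_erase ha)).cons_inv
        · intro a _; rfl
      rw [← hbij, Finset.sum_sigma]
      have hT : ∀ a ∈ L.toFinset, ∀ q ∈ (L.erase a).permutations.toFinset,
          plProb s (a :: q) = Real.exp (s a) / ((L.map fun k => Real.exp (s k)).sum)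
            * plProb s q := by
        intro a ha q hq
        simp only [List.mem_toFinset, List.mem_permutations] at ha hq
        have : (a :: q).Perm L := (hq.cons a).trans (List.perm_cons_erase ha).symm
        rw [plProb, sum_exp_perm s this]
      calc ∑ a ∈ L.toFinset, ∑ q ∈ (L.erase a).permutations.toFinset, plProb s (a :: q)
          = ∑ a ∈ L.toFinset, Real.exp (s a) / ((L.map fun k => Real.exp (s k)).sum) := by
            refine Finset.sum_congr rfl fun a ha => ?_
            rw [Finset.sum_congr rfl (hT a ha), ← Finset.mul_sum]
            have hlen : (L.erase a).length = m := by
              have : a ∈ L := List.mem_toFinset.mp ha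
              rw [List.length_erase_of_mem this, hn]; rfl
            rw [ih m (Nat.lt_succ_self m) (L.erase a) hlen (hnd.erase a), mul_one]
        _ = 1 := by
            rw [← Finset.sum_div]
            rw [List.sum_toFinset _ hnd]
            · exact div_self (ne_of_gt (sum_exp_pos s hLne))

lemma plProb_append {α : Type*} [DecidableEq α] (s : α → ℝ) :
    ∀ (p q R : List α), (p ++ q).Perm R →
      plProb s (p ++ q) = preP s p R * plProb s q := by
  intro p
  induction p with
  | nil => intro q R _; simp [preP]
  | cons a t ih =>
    intro q R h
    have haR : a ∈ R := h.subset (by simp)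
    have h' : (t ++ q).Perm (R.erase a) :=
      (h.trans (List.perm_cons_erase haR)).cons_inv
    rw [List.cons_append, plProb, preP, sum_exp_perm s (h'.cons a), ih q (R.erase a) h',
      mul_assoc]
    congr 2
    exact sum_exp_perm s (List.perm_cons_erase haR).symm
    
lemma preP_append {α : Type*} [DecidableEq α] (s : α → ℝ) :
    ∀ (p q R : List α), preP s (p ++ q) R = preP s p R * preP s q (R.diff p) := by
  intro p
  induction p with
  | nil => intro q R; simp [preP]
  | cons a t ih =>
    intro q R
    rw [List.cons_append, preP, preP, ih, List.diff_cons, mul_assoc]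

lemma perm_diff_of_append_perm {α : Type*} [DecidableEq α] :
    ∀ {p q l : List α}, (p ++ q).Perm l → q.Perm (l.diff p) := by
  intro p
  induction p with
  | nil => intro q l h; simpa using h
  | cons a t ih =>
    intro q l h
    have ha : a ∈ l := h.subset (by simp)
    have h' : (t ++ q).Perm (l.erase a) :=
      (h.trans (List.perm_cons_erase ha)).cons_inv
    rw [List.diff_cons]
    exact ih h'

lemma append_diff_perm {α : Type*} [DecidableEq α] :
    ∀ {p l : List α}, p.Nodup → l.Nodup → (∀ x ∈ p, x ∈ l) → (p ++ l.diff p).Perm l := by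
  intro p
  induction p with
  | nil => intro l _ _ _; simp
  | cons a t ih =>
    intro l hp hl hsub
    have ha : a ∈ l := hsub a (by simp)
    have hat : a ∉ t := by simp at hp; exact hp.1
    have ht : ∀ x ∈ t, x ∈ l.erase a := by
      intro x hx
      rw [List.mem_erase_of_ne (by rintro rfl; exact hat hx)]
      exact hsub x (by simp [hx])
    have := ih (by simp at hp; exact hp.2) (hl.erase a) ht
    rw [List.diff_cons, List.cons_append]
    exact (this.cons a).trans (List.perm_cons_erase ha).symm

lemma nodup_diff {α : Type*} [DecidableEq α] :
    ∀ (p : List α) {l : List α}, l.Nodup → (l.diff p).Nodup := by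
  intro p
  induction p with
  | nil => intro l h; simpa using h
  | cons a t ih => intro l h; rw [List.diff_cons]; exact ih (h.erase a)

/-- Probability of a prefix event under PL. -/
lemma plPr_prefix {α : Type*} [DecidableEq α] (s : α → ℝ) (S : Finset α)
    (p : List α) (hp : p.Nodup) (hpS : ∀ x ∈ p, x ∈ S) :
    plPr s S {l | l.take p.length = p} = preP s p S.toList := by
  classical
  have hSnd : S.toList.Nodup := S.nodup_toList
  rw [plPr]
  have h1 : ∀ l ∈ S.toList.permutations.toFinset,
      ({l | l.take p.length = p} : Set (List α)).indicator (plProb s) l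
        = if l.take p.length = p then plProb s l else 0 := by
    intro l _
    rw [Set.indicator_apply]
    congr 1
  rw [Finset.sum_congr rfl h1, ← Finset.sum_filter]
  have hbij : ∑ l ∈ S.toList.permutations.toFinset.filter (fun l => l.take p.length = p),
      plProb s l
      = ∑ q ∈ (S.toList.diff p).permutations.toFinset, plProb s (p ++ q) := by
    refine (Finset.sum_bij (fun q _ => p ++ q) ?_ ?_ ?_ ?_).symm
    · intro q hq
      simp only [List.mem_toFinset, List.mem_permutations] at hq
      simp only [Finset.mem_filter, List.mem_toFinset, List.mem_permutations]
      constructor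
      · exact (hq.append_left p).trans
          (append_diff_perm hp hSnd (fun x hx => Finset.mem_toList.mpr (hpS x hx)))
      · exact List.take_left
    · intro q₁ _ q₂ _ h
      exact List.append_cancel_left h
    · intro l hl
      simp only [Finset.mem_filter, List.mem_toFinset, List.mem_permutations] at hl
      have heq : p ++ l.drop p.length = l := by
        conv_rhs => rw [← List.take_append_drop p.length l]
        rw [hl.2]
      refine ⟨l.drop p.length, ?_, heq⟩
      simp only [List.mem_toFinset, List.mem_permutations]
      refine perm_diff_of_append_perm ?_
      rw [heq]; exact hl.1
    · intro q _; rfl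
  rw [hbij]
  have h2 : ∀ q ∈ (S.toList.diff p).permutations.toFinset,
      plProb s (p ++ q) = preP s p S.toList * plProb s q := by
    intro q hq
    simp only [List.mem_toFinset, List.mem_permutations] at hq
    refine plProb_append s p q S.toList ?_
    exact (hq.append_left p).trans
      (append_diff_perm hp hSnd (fun x hx => Finset.mem_toList.mpr (hpS x hx)))
  rw [Finset.sum_congr rfl h2, ← Finset.mul_sum,
    sum_plProb_s7 s (S.toList.diff p).length _ rfl (nodup_diff p hSnd), mul_one]

/-- Independence from irrelevant alternatives for Plackett–Luce: for a prefix
`p` of distinct elements of `S` with positive probability and distinct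
`d, d' ∈ S \ p`, the ratio of the conditional probabilities of placing `d`
versus `d'` at the next position equals `exp (s d - s d')`, independently of
the prefix `p` and of the ambient candidate set `S`. -/
theorem pl_iia {α : Type*} [DecidableEq α] (S : Finset α) (s : α → ℝ)
    (p : List α) (hp : p.Nodup) (hpS : ∀ x ∈ p, x ∈ S)
    (d d' : α) (hd : d ∈ S) (hd' : d' ∈ S) (hdp : d ∉ p) (hd'p : d' ∉ p)
    (hdd' : d ≠ d')
    (hpos : 0 < plPr s S {l | l.take p.length = p}) :
    (plPr s S {l | l.take (p.length + 1) = p ++ [d]} /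
        plPr s S {l | l.take p.length = p}) /
      (plPr s S {l | l.take (p.length + 1) = p ++ [d']} /
        plPr s S {l | l.take p.length = p})
      = Real.exp (s d - s d') := by
  classical
  have hSnd : S.toList.Nodup := S.nodup_toList
  set A := preP s p S.toList with hA
  set T := ((S.toList.diff p).map fun k => Real.exp (s k)).sum with hT
  have hden : plPr s S {l | l.take p.length = p} = A := plPr_prefix s S p hp hpS
  have hnum : ∀ e : α, e ∈ S → e ∉ p →
      plPr s S {l | l.take (p.length + 1) = p ++ [e]}
        = A * (Real.exp (s e) / T) := by
    intro e he hep
    have hnd : (p ++ [e]).Nodup := by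
      simp [List.nodup_append, hp, hep]
      rintro a ha rfl
      exact hep ha
    have hsub : ∀ x ∈ p ++ [e], x ∈ S := by
      intro x hx
      rcases List.mem_append.mp hx with h | h
      · exact hpS x h
      · simp at h; subst h; exact he
    have h := plPr_prefix s S (p ++ [e]) hnd hsub
    simp only [List.length_append, List.length_singleton] at h
    rw [h, preP_append]
    simp [preP, hT]
    exact Or.inl rfl
  have hdmem : d ∈ S.toList.diff p := by
    have hmem : d ∈ p ++ S.toList.diff p :=
      ((append_diff_perm hp hSnd fun x hx => Finset.mem_toList.mpr (hpS x hx)).symm).subset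
        (Finset.mem_toList.mpr hd)
    rcases List.mem_append.mp hmem with h | h
    · exact absurd h hdp
    · exact h
  have hTpos : 0 < T := sum_exp_pos s (by rintro h; rw [h] at hdmem; simp at hdmem)
  have hApos : 0 < A := by rw [hden] at hpos; exact hpos
  rw [hden, hnum d hd hdp, hnum d' hd' hd'p, Real.exp_sub]
  have h1 : Real.exp (s d') ≠ 0 := Real.exp_ne_zero _
  field_simp
end
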